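/- arXiv:1502.05383 — 5 statements merged into one kernel-verified Lean document; each statement's English description precedes it below -/
import Mathlib

section
/- Let A be a finite-dimensional semisimple real *-algebra with the canonical Frobenius form φ₀(a) = Σᵢ nᵢ (dim Dᵢ) Re tr(aᵢ) coming from the decomposition A ≅ ⊕ᵢ M(nᵢ, Dᵢ). Then φ₀ is a Frobenius form (the bilinear form (a,b) ↦ φ₀(ab) is non-degenerate) that is special, *-invariant, and symmetric. -/
/-!
On each Wedderburn block `M(n, D)`, `φ₀` is `n · dim D · Re tr`. Since `Re` is a real trace on `D`
fixed by conjugation, `φ₀` is symmetric and `*`-invariant. With `e` the standard basis `1, i, j, k`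
of `D`, the matrix units `E_pq e_s` and `E_qp ē_s / (n · dim D)` are dual bases for `φ₀`, which
gives the inverse `B` of the bilinear form explicitly (and hence non-degeneracy). Multiplying the
dual pairs gives `n · dim D` terms `E_qq / (n · dim D)` for each `q`, so `∑ B_L B_R = 1`: the weight
`n · dim D` in `φ₀` is exactly the normalisation that makes `B` special.
-/

open Matrix

/-- The three real division algebras ℝ, ℂ, ℍ. -/
inductive DivType | R | C | H

/-- The underlying type of a real division algebra. -/
def DivAlg : DivType → Type
  | .R => ℝ
  | .C => ℂ
  | .H => Quaternion ℝ

noncomputable instance instDivAlgRing : (t : DivType) → Ring (DivAlg t)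
  | .R => inferInstanceAs (Ring ℝ)
  | .C => inferInstanceAs (Ring ℂ)
  | .H => inferInstanceAs (Ring (Quaternion ℝ))

noncomputable instance instDivAlgStarRing : (t : DivType) → StarRing (DivAlg t)
  | .R => inferInstanceAs (StarRing ℝ)
  | .C => inferInstanceAs (StarRing ℂ)
  | .H => inferInstanceAs (StarRing (Quaternion ℝ))

noncomputable instance instDivAlgAlgebra : (t : DivType) → Algebra ℝ (DivAlg t)
  | .R => inferInstanceAs (Algebra ℝ ℝ)
  | .C => inferInstanceAs (Algebra ℝ ℂ)
  | .H => inferInstanceAs (Algebra ℝ (Quaternion ℝ))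

/-- The real part on each division algebra. -/
def DivRe : {t : DivType} → DivAlg t → ℝ
  | .R => id
  | .C => Complex.re
  | .H => QuaternionAlgebra.re

/-- The real dimension of each division algebra. -/
def dimD : DivType → ℕ | .R => 1 | .C => 2 | .H => 4

/-- A finite-dimensional semisimple real *-algebra, presented via
Artin–Wedderburn as ⊕ᵢ M(nᵢ, Dᵢ). -/
def SSAlg {ι : Type} (n : ι → ℕ) (d : ι → DivType) : Type :=
  (i : ι) → Matrix (Fin (n i)) (Fin (n i)) (DivAlg (d i))

noncomputable instance {ι : Type} (n : ι → ℕ) (d : ι → DivType) : Ring (SSAlg n d) :=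
  inferInstanceAs (Ring ((i : ι) → Matrix (Fin (n i)) (Fin (n i)) (DivAlg (d i))))

noncomputable instance {ι : Type} (n : ι → ℕ) (d : ι → DivType) : StarRing (SSAlg n d) :=
  inferInstanceAs (StarRing ((i : ι) → Matrix (Fin (n i)) (Fin (n i)) (DivAlg (d i))))

noncomputable instance {ι : Type} (n : ι → ℕ) (d : ι → DivType) : Module ℝ (SSAlg n d) :=
  inferInstanceAs (Module ℝ ((i : ι) → Matrix (Fin (n i)) (Fin (n i)) (DivAlg (d i))))

/-- The canonical Frobenius form φ₀(a) = Σᵢ nᵢ (dim Dᵢ) Re tr(aᵢ). -/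
noncomputable def phi0 {ι : Type} [Fintype ι] (n : ι → ℕ) (d : ι → DivType)
    (a : SSAlg n d) : ℝ :=
  ∑ i, (n i : ℝ) * (dimD (d i) : ℝ) * DivRe ((a i).trace)

section DivAlg

open scoped Quaternion

lemma divRe_add : ∀ {t : DivType} (x y : DivAlg t), DivRe (x + y) = DivRe x + DivRe y
  | .R, _, _ => rfl
  | .C, _, _ => rfl
  | .H, _, _ => rfl

lemma divRe_smul : ∀ {t : DivType} (r : ℝ) (x : DivAlg t), DivRe (r • x) = r * DivRe x
  | .R, _, _ => rfl
  | .C, r, x => Complex.smul_re r (show ℂ from x)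
  | .H, r, x => QuaternionAlgebra.re_smul r (show Quaternion ℝ from x)

def divReₗ (t : DivType) : DivAlg t →ₗ[ℝ] ℝ where
  toFun := DivRe
  map_add' := divRe_add
  map_smul' := divRe_smul

lemma divRe_star : ∀ {t : DivType} (x : DivAlg t), DivRe (star x) = DivRe x
  | .R, _ => rfl
  | .C, _ => rfl
  | .H, x => Quaternion.re_star (show Quaternion ℝ from x)

lemma quaternion_re_mul_comm (x y : Quaternion ℝ) : (x * y).re = (y * x).re := by
  simp only [Quaternion.re_mul]; ring

lemma divRe_mul_comm : ∀ {t : DivType} (x y : DivAlg t), DivRe (x * y) = DivRe (y * x)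
  | .R, x, y => mul_comm (show ℝ from x) y
  | .C, x, y => congrArg Complex.re (mul_comm (show ℂ from x) y)
  | .H, x, y => quaternion_re_mul_comm (show Quaternion ℝ from x) y

lemma divAlg_star_smul : ∀ {t : DivType} (r : ℝ) (x : DivAlg t), star (r • x) = r • star x
  | .R, r, x => star_smul r (show ℝ from x)
  | .C, r, x => star_smul r (show ℂ from x)
  | .H, r, x => Quaternion.star_smul r (show Quaternion ℝ from x)

noncomputable def complexBasis : Fin 2 → ℂ := ![1, Complex.I]

@[simps] def quatI : ℍ[ℝ] := ⟨0, 1, 0, 0⟩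
@[simps] def quatJ : ℍ[ℝ] := ⟨0, 0, 1, 0⟩
@[simps] def quatK : ℍ[ℝ] := ⟨0, 0, 0, 1⟩

def quaternionBasis : Fin 4 → ℍ[ℝ] := ![1, quatI, quatJ, quatK]

lemma sum_re_mul_star_smul_complexBasis (z : ℂ) :
    ∑ s, (z * star (complexBasis s)).re • complexBasis s = z := by
  apply Complex.ext <;> simp [complexBasis, Fin.sum_univ_two]

lemma sum_star_complexBasis_mul_self :
    ∑ s, star (complexBasis s) * complexBasis s = (2 : ℝ) • 1 := by
  apply Complex.ext <;> norm_num [complexBasis, Fin.sum_univ_two]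

lemma sum_re_mul_star_smul_quaternionBasis (x : ℍ[ℝ]) :
    ∑ s, (x * star (quaternionBasis s)).re • quaternionBasis s = x := by
  ext <;> simp [quaternionBasis, Fin.sum_univ_four]

lemma sum_star_quaternionBasis_mul_self :
    ∑ s, star (quaternionBasis s) * quaternionBasis s = (4 : ℝ) • 1 := by
  ext <;> simp [quaternionBasis, Fin.sum_univ_four]; norm_num

noncomputable def divBasis : (t : DivType) → Fin (dimD t) → DivAlg t
  | .R => fun _ => (1 : ℝ)
  | .C => complexBasis
  | .H => quaternionBasis

lemma sum_divRe_mul_star_smul_divBasis : ∀ {t : DivType} (x : DivAlg t),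
    ∑ s, DivRe (x * star (divBasis t s)) • divBasis t s = x
  | .R, x => show ∑ _ : Fin 1, ((show ℝ from x) * star 1) • (1 : ℝ) = x by
    simp; exact mul_one _
  | .C, x => sum_re_mul_star_smul_complexBasis (show ℂ from x)
  | .H, x => sum_re_mul_star_smul_quaternionBasis (show Quaternion ℝ from x)

lemma sum_star_divBasis_mul_self : ∀ t : DivType,
    ∑ s, star (divBasis t s) * divBasis t s = (dimD t : ℝ) • (1 : DivAlg t)
  | .R => show ∑ _ : Fin 1, star (1 : ℝ) * 1 = ((1 : ℕ) : ℝ) • (1 : ℝ) by simp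
  | .C => by
    rw [show ((dimD .C : ℕ) : ℝ) = 2 by norm_num [dimD]]
    exact sum_star_complexBasis_mul_self
  | .H => by
    rw [show ((dimD .H : ℕ) : ℝ) = 4 by norm_num [dimD]]
    exact sum_star_quaternionBasis_mul_self

lemma sum_divRe_mul_smul_star_divBasis {t : DivType} (x : DivAlg t) :
    ∑ s, DivRe (x * divBasis t s) • star (divBasis t s) = x := by
  have h := congrArg star (sum_divRe_mul_star_smul_divBasis (star x))
  rw [star_star, star_sum] at h
  simpa only [divAlg_star_smul, ← star_mul, divRe_star, divRe_mul_comm (divBasis t _)] using h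

end DivAlg

section ReTrace

variable {m : Type*} [Fintype m] {t : DivType}

noncomputable def reTrace (m : Type*) [Fintype m] (t : DivType) :
    Matrix m m (DivAlg t) →ₗ[ℝ] ℝ :=
  divReₗ t ∘ₗ Matrix.traceLinearMap m ℝ (DivAlg t)

lemma reTrace_apply (M : Matrix m m (DivAlg t)) : reTrace m t M = DivRe M.trace := rfl

lemma reTrace_mul_comm (M N : Matrix m m (DivAlg t)) :
    reTrace m t (M * N) = reTrace m t (N * M) := by
  simp only [reTrace, LinearMap.comp_apply, Matrix.traceLinearMap_apply, Matrix.trace,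
    Matrix.diag, Matrix.mul_apply, map_sum]
  rw [Finset.sum_comm]
  exact Finset.sum_congr rfl fun _ _ => Finset.sum_congr rfl fun _ _ => divRe_mul_comm _ _

lemma reTrace_star (M : Matrix m m (DivAlg t)) : reTrace m t (star M) = reTrace m t M := by
  rw [reTrace_apply, reTrace_apply, Matrix.star_eq_conjTranspose, Matrix.trace_conjTranspose,
    divRe_star]

variable [DecidableEq m]

lemma reTrace_mul_single (M : Matrix m m (DivAlg t)) (p q : m) (x : DivAlg t) :
    reTrace m t (M * Matrix.single q p x) = DivRe (M p q * x) := by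
  rw [reTrace_apply, Matrix.trace_mul_single]; rfl

lemma reTrace_single_mul (M : Matrix m m (DivAlg t)) (p q : m) (x : DivAlg t) :
    reTrace m t (Matrix.single p q x * M) = DivRe (x * M q p) := by
  rw [reTrace_apply, Matrix.trace_single_mul]; rfl

end ReTrace

/-- `B = ∑ j, BL j ⊗ BR j` is the inverse of the bilinear form `(a, b) ↦ φ (a * b)`, and `φ` is
special with respect to it. -/
structure IsSpecialInverse {K A J : Type*} [CommSemiring K] [Semiring A] [Module K A] [Fintype J]
    (φ : A → K) (BL BR : J → A) : Prop where
  sum_smul_left : ∀ a, ∑ j, φ (a * BL j) • BR j = a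
  sum_smul_right : ∀ a, ∑ j, φ (BR j * a) • BL j = a
  sum_mul : ∑ j, BL j * BR j = 1

lemma sum_sigma_pi_single {ι : Type*} [Fintype ι] [DecidableEq ι] {A : ι → Type*}
    [∀ i, AddCommMonoid (A i)] {J : ι → Type*} [∀ i, Fintype (J i)] (f : ∀ j : Σ i, J i, A j.1) :
    ∑ j, Pi.single j.1 (f j) = fun i => ∑ j, f ⟨i, j⟩ := by
  conv_rhs => rw [← Finset.univ_sum_single (fun i => ∑ j, f ⟨i, j⟩)]
  rw [Fintype.sum_sigma]
  exact Finset.sum_congr rfl fun i _ => (map_sum (AddMonoidHom.single A i) _ _).symm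

lemma sum_pi_single_apply {ι : Type*} [Fintype ι] [DecidableEq ι] {A : ι → Type*}
    [∀ i, AddCommMonoid (A i)] {M : Type*} [AddCommMonoid M] (φ : ∀ i, A i →+ M) (i : ι)
    (x : A i) :
    ∑ k, φ k (Pi.single i x k) = φ i x := by
  rw [Finset.sum_eq_single i (fun k _ hk => by rw [Pi.single_eq_of_ne hk, map_zero]) (by simp),
    Pi.single_eq_same]

namespace IsSpecialInverse

variable {K A J : Type*} [CommSemiring K] [Semiring A] [Module K A] [Fintype J] {φ : A → K}
  {BL BR : J → A}

lemma eq_zero_of_forall_mul_right (h : IsSpecialInverse φ BL BR) {a : A}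
    (ha : ∀ b, φ (a * b) = 0) : a = 0 := by
  rw [← h.sum_smul_left a]
  simp [ha]

lemma eq_zero_of_forall_mul_left (h : IsSpecialInverse φ BL BR) {b : A}
    (hb : ∀ a, φ (a * b) = 0) : b = 0 := by
  rw [← h.sum_smul_right b]
  simp [hb]

lemma comp_equiv {J' : Type*} [Fintype J'] (h : IsSpecialInverse φ BL BR) (e : J' ≃ J) :
    IsSpecialInverse φ (BL ∘ e) (BR ∘ e) where
  sum_smul_left a := (e.sum_comp fun j => φ (a * BL j) • BR j).trans (h.sum_smul_left a)
  sum_smul_right a := (e.sum_comp fun j => φ (BR j * a) • BL j).trans (h.sum_smul_right a)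
  sum_mul := (e.sum_comp fun j => BL j * BR j).trans h.sum_mul

lemma pi {ι : Type*} [Fintype ι] [DecidableEq ι] {A : ι → Type*} [∀ i, Semiring (A i)]
    [∀ i, Module K (A i)] {J : ι → Type*} [∀ i, Fintype (J i)] {φ : ∀ i, A i →ₗ[K] K}
    {BL BR : ∀ i, J i → A i} (h : ∀ i, IsSpecialInverse (φ i) (BL i) (BR i)) :
    IsSpecialInverse (fun a : ∀ i, A i => ∑ i, φ i (a i))
      (fun j : Σ i, J i => Pi.single j.1 (BL j.1 j.2))
      (fun j : Σ i, J i => Pi.single j.1 (BR j.1 j.2)) := by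
  have hφ := sum_pi_single_apply (fun i => (φ i).toAddMonoidHom)
  simp only [LinearMap.toAddMonoidHom_coe] at hφ
  refine ⟨fun a => ?_, fun a => ?_, ?_⟩
  · simp_rw [← Pi.single_mul_right, hφ, ← Pi.single_smul (f := A), sum_sigma_pi_single]
    exact funext fun i => (h i).sum_smul_left (a i)
  · simp_rw [← Pi.single_mul_left, hφ, ← Pi.single_smul (f := A), sum_sigma_pi_single]
    exact funext fun i => (h i).sum_smul_right (a i)
  · simp_rw [← Pi.single_mul, sum_sigma_pi_single]
    exact funext fun i => (h i).sum_mul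

end IsSpecialInverse

lemma sum_matrix_single {m R S : Type*} [DecidableEq m] [AddCommMonoid R] [Fintype S]
    (p q : m) (x : S → R) : ∑ s, Matrix.single p q (x s) = Matrix.single p q (∑ s, x s) :=
  (map_sum (Matrix.singleAddMonoidHom p q) x _).symm

lemma dimD_pos (t : DivType) : 0 < dimD t := by
  cases t <;> decide

section MatrixBlock

variable (m : Type*) [Fintype m] (t : DivType)

noncomputable def blockWeight : ℝ := Fintype.card m * dimD t

noncomputable def canonicalMatrixForm : Matrix m m (DivAlg t) →ₗ[ℝ] ℝ :=
  blockWeight m t • reTrace m t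

lemma blockWeight_ne_zero [Nonempty m] : blockWeight m t ≠ 0 := by
  have := dimD_pos t
  unfold blockWeight
  positivity

variable {m t} in
lemma canonicalMatrixForm_mul_comm (M N : Matrix m m (DivAlg t)) :
    canonicalMatrixForm m t (M * N) = canonicalMatrixForm m t (N * M) := by
  rw [canonicalMatrixForm, LinearMap.smul_apply, LinearMap.smul_apply, reTrace_mul_comm]

variable {m t} in
lemma canonicalMatrixForm_star (M : Matrix m m (DivAlg t)) :
    canonicalMatrixForm m t (star M) = canonicalMatrixForm m t M := by
  rw [canonicalMatrixForm, LinearMap.smul_apply, LinearMap.smul_apply, reTrace_star]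

variable [DecidableEq m]

noncomputable def casimirLeft (j : m × m × Fin (dimD t)) : Matrix m m (DivAlg t) :=
  Matrix.single j.2.1 j.1 ((blockWeight m t)⁻¹ • star (divBasis t j.2.2))

noncomputable def casimirRight (j : m × m × Fin (dimD t)) : Matrix m m (DivAlg t) :=
  Matrix.single j.1 j.2.1 (divBasis t j.2.2)

variable {m t}

lemma canonicalMatrixForm_mul_casimirLeft [Nonempty m] (M : Matrix m m (DivAlg t))
    (j : m × m × Fin (dimD t)) :
    canonicalMatrixForm m t (M * casimirLeft m t j)
      = DivRe (M j.1 j.2.1 * star (divBasis t j.2.2)) := by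
  rw [canonicalMatrixForm, LinearMap.smul_apply, casimirLeft, reTrace_mul_single, mul_smul_comm,
    divRe_smul, smul_eq_mul, ← mul_assoc, mul_inv_cancel₀ (blockWeight_ne_zero m t), one_mul]

lemma canonicalMatrixForm_casimirRight_mul (M : Matrix m m (DivAlg t))
    (j : m × m × Fin (dimD t)) :
    canonicalMatrixForm m t (casimirRight m t j * M)
      = blockWeight m t * DivRe (M j.2.1 j.1 * divBasis t j.2.2) := by
  rw [canonicalMatrixForm, LinearMap.smul_apply, casimirRight, reTrace_single_mul, smul_eq_mul,
    divRe_mul_comm]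

lemma sum_casimirLeft_mul_casimirRight [Nonempty m] :
    ∑ j, casimirLeft m t j * casimirRight m t j = 1 := by
  have hcard : (Fintype.card m : ℝ) ≠ 0 := Nat.cast_ne_zero.mpr Fintype.card_ne_zero
  have hw : (blockWeight m t)⁻¹ * dimD t = (Fintype.card m : ℝ)⁻¹ := by
    rw [blockWeight, mul_inv, mul_assoc, inv_mul_cancel₀ (by exact_mod_cast (dimD_pos t).ne'),
      mul_one]
  calc ∑ j, casimirLeft m t j * casimirRight m t j
      = ∑ _p : m, ∑ q : m, Matrix.single q q ((Fintype.card m : ℝ)⁻¹ • (1 : DivAlg t)) := by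
        simp_rw [casimirLeft, casimirRight, Fintype.sum_prod_type, Matrix.single_mul_single_same,
          smul_mul_assoc, sum_matrix_single, ← Finset.smul_sum, sum_star_divBasis_mul_self,
          smul_smul, hw]
    _ = ∑ q : m, Matrix.single q q 1 := by
        rw [Finset.sum_const, Finset.card_univ, ← Nat.cast_smul_eq_nsmul ℝ, Finset.smul_sum]
        simp_rw [Matrix.smul_single, smul_smul, mul_inv_cancel₀ hcard, one_smul]
    _ = 1 := Matrix.sum_single_one

lemma isSpecialInverse_canonicalMatrixForm :
    IsSpecialInverse (canonicalMatrixForm m t) (casimirLeft m t) (casimirRight m t) := by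
  rcases isEmpty_or_nonempty m with hm | hm
  · exact ⟨fun _ => Subsingleton.elim _ _, fun _ => Subsingleton.elim _ _, Subsingleton.elim _ _⟩
  refine ⟨fun M => ?_, fun M => ?_, sum_casimirLeft_mul_casimirRight⟩
  · simp_rw [canonicalMatrixForm_mul_casimirLeft, casimirRight, Fintype.sum_prod_type,
      Matrix.smul_single, sum_matrix_single, sum_divRe_mul_star_smul_divBasis]
    exact (Matrix.matrix_eq_sum_single M).symm
  · simp_rw [canonicalMatrixForm_casimirRight_mul, casimirLeft, Matrix.smul_single, smul_smul,
      mul_right_comm _ _ (blockWeight m t)⁻¹, mul_inv_cancel₀ (blockWeight_ne_zero m t), one_mul,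
      Fintype.sum_prod_type, sum_matrix_single, sum_divRe_mul_smul_star_divBasis]
    rw [Finset.sum_comm]
    exact (Matrix.matrix_eq_sum_single M).symm

end MatrixBlock

section SSAlg

variable {ι : Type} [Fintype ι] (n : ι → ℕ) (d : ι → DivType)

lemma phi0_eq_sum_canonicalMatrixForm (a : SSAlg n d) :
    phi0 n d a = ∑ i, canonicalMatrixForm (Fin (n i)) (d i) (a i) := by
  simp [phi0, canonicalMatrixForm, blockWeight, reTrace_apply]

lemma phi0_mul_comm (a b : SSAlg n d) : phi0 n d (a * b) = phi0 n d (b * a) := by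
  simp only [phi0_eq_sum_canonicalMatrixForm]
  exact Finset.sum_congr rfl fun i _ => canonicalMatrixForm_mul_comm (a i) (b i)

lemma phi0_star (a : SSAlg n d) : phi0 n d (star a) = phi0 n d a := by
  simp only [phi0_eq_sum_canonicalMatrixForm]
  exact Finset.sum_congr rfl fun i _ => canonicalMatrixForm_star (a i)

lemma exists_isSpecialInverse_phi0 :
    ∃ (k : ℕ) (BL BR : Fin k → SSAlg n d), IsSpecialInverse (phi0 n d) BL BR := by
  classical
  have h : IsSpecialInverse (phi0 n d)
      (fun j : Σ i, Fin (n i) × Fin (n i) × Fin (dimD (d i)) => Pi.single j.1 (casimirLeft _ _ j.2))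
      (fun j => Pi.single j.1 (casimirRight _ _ j.2)) := by
    rw [funext (phi0_eq_sum_canonicalMatrixForm n d)]
    exact IsSpecialInverse.pi fun i =>
      isSpecialInverse_canonicalMatrixForm (m := Fin (n i)) (t := d i)
  exact ⟨_, _, _, h.comp_equiv (Fintype.equivFin _).symm⟩

end SSAlg

theorem canonical_frobenius_form_general
    {ι : Type} [Fintype ι] (n : ι → ℕ) (d : ι → DivType) :
    -- non-degeneracy on both sides
    (∀ a : SSAlg n d, (∀ b, phi0 n d (a * b) = 0) → a = 0)
    ∧ (∀ b : SSAlg n d, (∀ a, phi0 n d (a * b) = 0) → b = 0)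
    -- *-invariance
    ∧ (∀ a : SSAlg n d, phi0 n d (star a) = phi0 n d a)
    -- symmetry
    ∧ (∀ a b : SSAlg n d, phi0 n d (a * b) = phi0 n d (b * a))
    -- speciality: the inverse bilinear element B = Σ B_L ⊗ B_R satisfies Σ B_L B_R = 1
    ∧ (∃ (k : ℕ) (BL BR : Fin k → SSAlg n d),
        (∀ a, ∑ j, phi0 n d (a * BL j) • BR j = a)
        ∧ (∀ a, ∑ j, phi0 n d (BR j * a) • BL j = a)
        ∧ ∑ j, BL j * BR j = 1) := by
  obtain ⟨k, BL, BR, hB⟩ := exists_isSpecialInverse_phi0 n d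
  exact ⟨fun _ => hB.eq_zero_of_forall_mul_right, fun _ => hB.eq_zero_of_forall_mul_left,
    phi0_star n d, phi0_mul_comm n d,
    k, BL, BR, hB.sum_smul_left, hB.sum_smul_right, hB.sum_mul⟩

/-- The canonical form φ₀ on a finite-dimensional semisimple real
*-algebra ⊕ᵢ M(nᵢ,Dᵢ) is a Frobenius form (its associated bilinear form is
non-degenerate) which is special, *-invariant, and symmetric. -/
theorem canonical_frobenius_form
    {ι : Type} [Fintype ι] (n : ι → ℕ) (d : ι → DivType) (hn : ∀ i, 0 < n i) :
    -- non-degeneracy on both sides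
    (∀ a : SSAlg n d, (∀ b, phi0 n d (a * b) = 0) → a = 0)
    ∧ (∀ b : SSAlg n d, (∀ a, phi0 n d (a * b) = 0) → b = 0)
    -- *-invariance
    ∧ (∀ a : SSAlg n d, phi0 n d (star a) = phi0 n d a)
    -- symmetry
    ∧ (∀ a b : SSAlg n d, phi0 n d (a * b) = phi0 n d (b * a))
    -- speciality: the inverse bilinear element B = Σ B_L ⊗ B_R satisfies Σ B_L B_R = 1
    ∧ (∃ (k : ℕ) (BL BR : Fin k → SSAlg n d),
        (∀ a, ∑ j, phi0 n d (a * BL j) • BR j = a)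
        ∧ (∀ a, ∑ j, phi0 n d (BR j * a) • BL j = a)
        ∧ ∑ j, BL j * BR j = 1) :=
  canonical_frobenius_form_general n d
end

section
/- Every Dirac operator D of a finite real spectral triple can be written as D = θ + ε′JθJ⁻¹, where θ is a self-adjoint operator on H commuting with the right action Jρ(a)J⁻¹ of A for all a, and satisfying θΓ + Γθ = 0 when s is even (θΓ = Γθ when s is odd). Conversely any such θ defines a Dirac operator. -/
/-!
Write `j X = J X J⁻¹` and let `C` be the commutant of the right action `j (ρ A)`; it is a
*-subalgebra of matrices containing `ρ A` (zeroth-order condition) and `Γ`. By the first-order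
condition `a ↦ [D, ρ a]` is a derivation of `ρ A` into `C`, and it is inner: projecting `D`
orthogonally (for the Hilbert–Schmidt inner product) onto `C` gives `θ₀ ∈ C` with `D - θ₀`
commuting with `ρ A`, hence `j (D - θ₀) ∈ C`. As `j D = ε' D`, the element
`θ = ½ (θ₀ + ε' j (D - θ₀)) ∈ C` satisfies `D = θ + ε' j θ`, and averaging `θ` with `θᴴ` and with
`∓ Γ θ Γ` makes it self-adjoint and graded without changing `θ + ε' j θ`. Conversely, `j θ`
commutes with `ρ A` whenever `θ` commutes with `j (ρ A)`, so `θ + ε' j θ` inherits the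
first-order condition from `θ`.
-/

open Matrix

theorem mul_eq_smul_mul_iff_mul_mul_eq_smul {R M : Type*} [Monoid M] [SMul R M]
    [IsScalarTower R M M] [SMulCommClass R M M] {Γ : M} (hΓ : Γ * Γ = 1) (σ : R) (X : M) :
    X * Γ = σ • (Γ * X) ↔ Γ * X * Γ = σ • X := by
  constructor
  · intro h
    rw [mul_assoc, h, mul_smul_comm, ← mul_assoc, hΓ, one_mul]
  · intro h
    rw [← one_mul (X * Γ), ← hΓ, mul_assoc, ← mul_assoc Γ X, h, mul_smul_comm]

theorem eq_neg_and_eq_iff_eq_ite_smul {R M : Type*} [Ring R] [AddCommGroup M] [Module R M]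
    (p : Prop) [Decidable p] (x y : M) :
    ((p → x = -y) ∧ (¬p → x = y)) ↔ x = (if p then -1 else 1 : R) • y := by
  by_cases hp : p <;> simp [hp]

theorem StarSubalgebra.mem_centralizer_iff_of_star_mem {R A : Type*} [CommSemiring R] [StarRing R]
    [Semiring A] [StarRing A] [Algebra R A] [StarModule R A] {s : Set A}
    (hs : ∀ g ∈ s, star g ∈ s) {z : A} : z ∈ centralizer R s ↔ ∀ g ∈ s, Commute g z := by
  rw [mem_centralizer_iff]
  exact ⟨fun h g hg => (h g hg).1, fun h g hg => ⟨h g hg, h _ (hs g hg)⟩⟩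

theorem Submodule.apply_sub_starProjection_eq_zero {𝕜 E : Type*} [RCLike 𝕜]
    [NormedAddCommGroup E] [InnerProductSpace 𝕜 E] (S : Submodule 𝕜 E) [S.HasOrthogonalProjection]
    (T : E →ₗ[𝕜] E) (hS : ∀ x ∈ S, T x ∈ S) (hSo : ∀ x ∈ Sᗮ, T x ∈ Sᗮ) {d : E}
    (hd : T d ∈ S) : T (d - S.starProjection d) = 0 := by
  have hmem : T (d - S.starProjection d) ∈ S := by
    rw [map_sub]
    exact S.sub_mem hd (hS _ (S.starProjection_apply_mem d))
  have hperp := hSo _ (S.sub_starProjection_mem_orthogonal d)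
  simpa [S.inf_orthogonal_eq_bot] using Submodule.mem_inf.mpr ⟨hmem, hperp⟩

open scoped ComplexOrder in
theorem StarSubalgebra.exists_mem_forall_commute_sub {n 𝕜 : Type*} [Fintype n] [DecidableEq n]
    [RCLike 𝕜] (C : StarSubalgebra 𝕜 (Matrix n n 𝕜))
    (D : Matrix n n 𝕜) : ∃ θ ∈ C, ∀ r ∈ C, D * r - r * D ∈ C → Commute (D - θ) r := by
  let _ : NormedAddCommGroup (Matrix n n 𝕜) := toMatrixNormedAddCommGroup 1 PosDef.one
  let _ : InnerProductSpace 𝕜 (Matrix n n 𝕜) := toMatrixInnerProductSpace 1 PosDef.one.posSemidef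
  have inner_eq (x y : Matrix n n 𝕜) : inner 𝕜 x y = (y * xᴴ).trace := by
    change (y * 1 * xᴴ).trace = _
    rw [mul_one]
  let S := Subalgebra.toSubmodule C.toSubalgebra
  refine ⟨S.starProjection D, S.starProjection_apply_mem D, fun r hr hD => ?_⟩
  let T : Matrix n n 𝕜 →ₗ[𝕜] Matrix n n 𝕜 := LinearMap.mulRight 𝕜 r - LinearMap.mulLeft 𝕜 r
  have hT : T (D - S.starProjection D) = 0 := by
    refine S.apply_sub_starProjection_eq_zero T (fun x hx => ?_) (fun y hy => ?_) hD
    · exact C.sub_mem (C.mul_mem hx hr) (C.mul_mem hr hx)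
    · -- the adjoint of `T` is `X ↦ X * rᴴ - rᴴ * X`, which again preserves `C`
      have hr' : rᴴ ∈ C := star_mem hr
      rw [Submodule.mem_orthogonal] at hy ⊢
      intro x hx
      have h1 := hy _ (C.mul_mem hx hr')
      have h2 := hy _ (C.mul_mem hr' hx)
      simp only [T, LinearMap.sub_apply, LinearMap.mulRight_apply, LinearMap.mulLeft_apply,
        inner_eq, conjTranspose_mul, conjTranspose_conjTranspose] at h1 h2 ⊢
      rw [sub_mul, trace_sub, mul_assoc, h1, mul_assoc, trace_mul_comm, mul_assoc, h2, sub_zero]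
  exact sub_eq_zero.mp hT

namespace Matrix

variable {n : Type*} [Fintype n]

/-- `X ↦ J X J⁻¹` for the antiunitary `J v = K (star v)`. -/
def conjAntiunitary (K X : Matrix n n ℂ) : Matrix n n ℂ := K * X.map (starRingEnd ℂ) * Kᴴ

variable {K : Matrix n n ℂ}

theorem conjAntiunitary_add (X Y : Matrix n n ℂ) :
    conjAntiunitary K (X + Y) = conjAntiunitary K X + conjAntiunitary K Y := by
  rw [conjAntiunitary, Matrix.map_add _ (map_add _), mul_add, add_mul]; rfl

theorem conjAntiunitary_sub (X Y : Matrix n n ℂ) :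
    conjAntiunitary K (X - Y) = conjAntiunitary K X - conjAntiunitary K Y := by
  rw [conjAntiunitary, Matrix.map_sub _ (map_sub _), mul_sub, sub_mul]; rfl

theorem conjAntiunitary_smul (c : ℂ) (X : Matrix n n ℂ) :
    conjAntiunitary K (c • X) = star c • conjAntiunitary K X := by
  rw [conjAntiunitary, Matrix.map_smul' _ c X (map_mul _), mul_smul_comm, smul_mul]; rfl

theorem conjTranspose_conjAntiunitary (X : Matrix n n ℂ) :
    (conjAntiunitary K X)ᴴ = conjAntiunitary K Xᴴ := by
  simp only [conjAntiunitary, conjTranspose_mul, conjTranspose_conjTranspose, mul_assoc,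
    conjTranspose_map _ (fun _ => rfl : Function.Semiconj (starRingEnd ℂ) star star)]

theorem conjAntiunitary_mul [DecidableEq n] (hK : K ∈ unitaryGroup n ℂ) (X Y : Matrix n n ℂ) :
    conjAntiunitary K (X * Y) = conjAntiunitary K X * conjAntiunitary K Y := by
  have hKK : Kᴴ * K = 1 := Unitary.star_mul_self_of_mem hK
  calc conjAntiunitary K (X * Y)
      = K * X.map (starRingEnd ℂ) * (Kᴴ * K) * Y.map (starRingEnd ℂ) * Kᴴ := by
        rw [conjAntiunitary, Matrix.map_mul, hKK, mul_one]
        simp only [mul_assoc]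
    _ = conjAntiunitary K X * conjAntiunitary K Y := by
        simp only [conjAntiunitary, mul_assoc]

theorem commute_conjAntiunitary [DecidableEq n] (hK : K ∈ unitaryGroup n ℂ) {X Y : Matrix n n ℂ}
    (h : Commute X Y) : Commute (conjAntiunitary K X) (conjAntiunitary K Y) := by
  simp only [Commute, SemiconjBy, ← conjAntiunitary_mul hK, h.eq]

theorem conjAntiunitary_conjAntiunitary (X : Matrix n n ℂ) :
    conjAntiunitary K (conjAntiunitary K X)
      = K * K.map (starRingEnd ℂ) * X * (K * K.map (starRingEnd ℂ))ᴴ := by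
  have hmap : (X.map (starRingEnd ℂ)).map (starRingEnd ℂ) = X := by ext; simp
  simp only [conjAntiunitary, Matrix.map_mul, hmap, conjTranspose_mul, mul_assoc,
    ← conjTranspose_map _ (fun _ => rfl : Function.Semiconj (starRingEnd ℂ) star star)]

theorem involutive_conjAntiunitary [DecidableEq n] {ε : ℂ} (hε : ε = 1 ∨ ε = -1)
    (hJ2 : K * K.map (starRingEnd ℂ) = ε • 1) : Function.Involutive (conjAntiunitary K) := by
  intro X
  rw [conjAntiunitary_conjAntiunitary, hJ2]
  rcases hε with rfl | rfl <;> simp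

theorem mul_map_eq_smul_mul_iff [DecidableEq n] (hK : K ∈ unitaryGroup n ℂ) (c : ℂ)
    (X : Matrix n n ℂ) :
    K * X.map (starRingEnd ℂ) = c • (X * K) ↔ conjAntiunitary K X = c • X := by
  have hKK : Kᴴ * K = 1 := Unitary.star_mul_self_of_mem hK
  have hKK' : K * Kᴴ = 1 := Unitary.mul_star_self_of_mem hK
  rw [← smul_mul_assoc]
  constructor
  · intro h
    rw [conjAntiunitary, h, mul_assoc, hKK', mul_one]
  · intro h
    rw [← h, conjAntiunitary, mul_assoc _ Kᴴ, hKK, mul_one]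

end Matrix

section DiracOf

variable {n : Type*} [Fintype n] {K Γ : Matrix n n ℂ} {ε' : ℂ}

def diracOf (K : Matrix n n ℂ) (ε' : ℂ) (θ : Matrix n n ℂ) : Matrix n n ℂ :=
  θ + ε' • conjAntiunitary K θ

theorem diracOf_add (θ θ' : Matrix n n ℂ) :
    diracOf K ε' (θ + θ') = diracOf K ε' θ + diracOf K ε' θ' := by
  rw [diracOf, diracOf, diracOf, conjAntiunitary_add]; module

theorem diracOf_smul {c : ℂ} (hc : star c = c) (θ : Matrix n n ℂ) :
    diracOf K ε' (c • θ) = c • diracOf K ε' θ := by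
  rw [diracOf, diracOf, conjAntiunitary_smul, hc]; module

theorem conjTranspose_diracOf (hε' : ε' = 1 ∨ ε' = -1) (θ : Matrix n n ℂ) :
    (diracOf K ε' θ)ᴴ = diracOf K ε' θᴴ := by
  have hε's : star ε' = ε' := by rcases hε' with rfl | rfl <;> simp
  rw [diracOf, diracOf, conjTranspose_add, conjTranspose_smul, conjTranspose_conjAntiunitary, hε's]

theorem conjAntiunitary_diracOf (hj : Function.Involutive (conjAntiunitary K))
    (hε' : ε' = 1 ∨ ε' = -1) (θ : Matrix n n ℂ) :
    conjAntiunitary K (diracOf K ε' θ) = ε' • diracOf K ε' θ := by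
  rw [diracOf, conjAntiunitary_add, conjAntiunitary_smul, hj θ]
  rcases hε' with rfl | rfl <;> simp only [star_one, star_neg] <;> module

theorem diracOf_mul_mul [DecidableEq n] (hK : K ∈ unitaryGroup n ℂ) {ε'' : ℂ}
    (hε'' : ε'' = 1 ∨ ε'' = -1) (hJΓ : conjAntiunitary K Γ = ε'' • Γ) (θ : Matrix n n ℂ) :
    diracOf K ε' (Γ * θ * Γ) = Γ * diracOf K ε' θ * Γ := by
  rw [diracOf, diracOf, conjAntiunitary_mul hK, conjAntiunitary_mul hK, hJΓ]
  rcases hε'' with rfl | rfl <;> simp [mul_add, add_mul]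

theorem diracOf_mul_sub_mul {θ r : Matrix n n ℂ} (h : Commute (conjAntiunitary K θ) r) :
    diracOf K ε' θ * r - r * diracOf K ε' θ = θ * r - r * θ := by
  rw [diracOf, add_mul, mul_add, smul_mul_assoc, mul_smul_comm, h.eq]; abel

theorem exists_mem_diracOf_eq [DecidableEq n] (C : StarSubalgebra ℂ (Matrix n n ℂ))
    (hj : Function.Involutive (conjAntiunitary K)) (hε' : ε' = 1 ∨ ε' = -1)
    {D θ₀ : Matrix n n ℂ} (hD : conjAntiunitary K D = ε' • D) (hθ₀ : θ₀ ∈ C)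
    (hη : conjAntiunitary K (D - θ₀) ∈ C) : ∃ θ ∈ C, diracOf K ε' θ = D := by
  refine ⟨(2⁻¹ : ℂ) • (θ₀ + ε' • conjAntiunitary K (D - θ₀)),
    C.smul_mem (add_mem hθ₀ (C.smul_mem hη _)) _, ?_⟩
  rw [diracOf, conjAntiunitary_smul, conjAntiunitary_add, conjAntiunitary_smul, hj,
    conjAntiunitary_sub, hD]
  rcases hε' with rfl | rfl <;> simp only [star_one, star_neg, star_inv₀, star_ofNat] <;> module

theorem exists_mem_conjTranspose_eq_diracOf_eq [DecidableEq n] (C : StarSubalgebra ℂ (Matrix n n ℂ))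
    (hε' : ε' = 1 ∨ ε' = -1) {D θ : Matrix n n ℂ} (hD : Dᴴ = D) (hθ : θ ∈ C)
    (hθD : diracOf K ε' θ = D) : ∃ θ ∈ C, θᴴ = θ ∧ diracOf K ε' θ = D := by
  have h2 : star (2⁻¹ : ℂ) = 2⁻¹ := by simp
  refine ⟨(2⁻¹ : ℂ) • (θ + θᴴ), C.smul_mem (add_mem hθ (star_mem hθ)) _, ?_, ?_⟩
  · rw [conjTranspose_smul, conjTranspose_add, conjTranspose_conjTranspose, h2, add_comm]
  · rw [diracOf_smul h2, diracOf_add, ← conjTranspose_diracOf hε', hθD, hD]; module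

theorem exists_mem_graded_diracOf_eq [DecidableEq n] (C : StarSubalgebra ℂ (Matrix n n ℂ))
    (hK : K ∈ unitaryGroup n ℂ) {ε'' σ : ℂ}
    (hε'' : ε'' = 1 ∨ ε'' = -1) (hσ : σ = 1 ∨ σ = -1) (hΓC : Γ ∈ C) (hΓsa : Γᴴ = Γ)
    (hΓ2 : Γ * Γ = 1) (hJΓ : conjAntiunitary K Γ = ε'' • Γ) {D θ : Matrix n n ℂ}
    (hD : Γ * D * Γ = σ • D) (hθ : θ ∈ C) (hθsa : θᴴ = θ) (hθD : diracOf K ε' θ = D) :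
    ∃ θ ∈ C, θᴴ = θ ∧ Γ * θ * Γ = σ • θ ∧ diracOf K ε' θ = D := by
  have h2 : star (2⁻¹ : ℂ) = 2⁻¹ := by simp
  have hσs : star σ = σ := by rcases hσ with rfl | rfl <;> simp
  have hσ2 : σ * σ = 1 := by rcases hσ with rfl | rfl <;> norm_num
  have hΓθΓ : Γ * (Γ * θ * Γ) * Γ = θ := by
    rw [← mul_assoc, ← mul_assoc, hΓ2, one_mul, mul_assoc, hΓ2, mul_one]
  refine ⟨(2⁻¹ : ℂ) • (θ + σ • (Γ * θ * Γ)),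
    C.smul_mem (add_mem hθ (C.smul_mem (mul_mem (mul_mem hΓC hθ) hΓC) _)) _, ?_, ?_, ?_⟩
  · rw [conjTranspose_smul, conjTranspose_add, conjTranspose_smul, conjTranspose_mul,
      conjTranspose_mul, hΓsa, hθsa, h2, hσs, mul_assoc]
  · simp only [mul_smul_comm, smul_mul_assoc, mul_add, add_mul, hΓθΓ]
    rcases hσ with rfl | rfl <;> module
  · rw [diracOf_smul h2, diracOf_add, diracOf_smul hσs, diracOf_mul_mul hK hε'' hJΓ, hθD,
      hD, smul_smul, hσ2]
    module

theorem diracOf_mul_eq_smul_mul [DecidableEq n] (hK : K ∈ unitaryGroup n ℂ) {ε'' σ : ℂ}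
    (hε'' : ε'' = 1 ∨ ε'' = -1) (hσ : σ = 1 ∨ σ = -1) (hΓ2 : Γ * Γ = 1)
    (hJΓ : conjAntiunitary K Γ = ε'' • Γ) {θ : Matrix n n ℂ} (hθ : θ * Γ = σ • (Γ * θ)) :
    diracOf K ε' θ * Γ = σ • (Γ * diracOf K ε' θ) := by
  have hσs : star σ = σ := by rcases hσ with rfl | rfl <;> simp
  rw [mul_eq_smul_mul_iff_mul_mul_eq_smul hΓ2] at hθ ⊢
  rw [← diracOf_mul_mul hK hε'' hJΓ, hθ, diracOf_smul hσs]

theorem commute_diracOf_mul_sub_mul [DecidableEq n] {ι : Type*} (ρ : ι → Matrix n n ℂ)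
    (hK : K ∈ unitaryGroup n ℂ) (hj : Function.Involutive (conjAntiunitary K))
    (hbimod : ∀ a b, Commute (ρ a) (conjAntiunitary K (ρ b))) {θ : Matrix n n ℂ}
    (hθ : ∀ a, Commute θ (conjAntiunitary K (ρ a))) (a b : ι) :
    Commute (diracOf K ε' θ * ρ a - ρ a * diracOf K ε' θ) (conjAntiunitary K (ρ b)) := by
  have hJθ : Commute (conjAntiunitary K θ) (ρ a) := by
    simpa only [hj (ρ a)] using commute_conjAntiunitary hK (hθ a)
  rw [diracOf_mul_sub_mul hJθ]
  exact ((hθ b).mul_left (hbimod a b)).sub_left ((hbimod a b).mul_left (hθ b))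

theorem exists_diracOf_eq_of_firstOrder [DecidableEq n] {ι : Type*} (ρ : ι → Matrix n n ℂ)
    (hρstar : ∀ a, ∃ b, (ρ a)ᴴ = ρ b) (hK : K ∈ unitaryGroup n ℂ)
    (hj : Function.Involutive (conjAntiunitary K)) {ε'' σ : ℂ} (hε' : ε' = 1 ∨ ε' = -1)
    (hε'' : ε'' = 1 ∨ ε'' = -1) (hσ : σ = 1 ∨ σ = -1) (hΓsa : Γᴴ = Γ) (hΓ2 : Γ * Γ = 1)
    (hΓρ : ∀ a, Commute Γ (ρ a)) (hJΓ : conjAntiunitary K Γ = ε'' • Γ)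
    (hbimod : ∀ a b, Commute (ρ a) (conjAntiunitary K (ρ b))) {D : Matrix n n ℂ}
    (hDsa : Dᴴ = D) (hDΓ : D * Γ = σ • (Γ * D)) (hJD : conjAntiunitary K D = ε' • D)
    (hfirst : ∀ a b, Commute (D * ρ a - ρ a * D) (conjAntiunitary K (ρ b))) :
    ∃ θ, θᴴ = θ ∧ (∀ a, Commute θ (conjAntiunitary K (ρ a))) ∧ θ * Γ = σ • (Γ * θ)
      ∧ D = diracOf K ε' θ := by
  set C := StarSubalgebra.centralizer ℂ (Set.range fun a => conjAntiunitary K (ρ a))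
  have hmemC (X : Matrix n n ℂ) : X ∈ C ↔ ∀ a, Commute X (conjAntiunitary K (ρ a)) := by
    rw [StarSubalgebra.mem_centralizer_iff_of_star_mem, Set.forall_mem_range]
    · exact forall_congr' fun a => Commute.symm_iff
    · rintro _ ⟨a, rfl⟩
      obtain ⟨b, hb⟩ := hρstar a
      exact ⟨b, by rw [star_eq_conjTranspose, conjTranspose_conjAntiunitary, hb]⟩
  have hρC (a : ι) : ρ a ∈ C := (hmemC _).2 (hbimod a)
  have hΓC : Γ ∈ C := (hmemC Γ).2 fun a => by
    have h := commute_conjAntiunitary hK (hΓρ a)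
    rw [hJΓ] at h
    rcases hε'' with rfl | rfl <;> simpa using h
  obtain ⟨θ₀, hθ₀, hθ₀comm⟩ := C.exists_mem_forall_commute_sub D
  have hη : conjAntiunitary K (D - θ₀) ∈ C := (hmemC _).2 fun a => by
    simpa only [hj (ρ a)] using
      commute_conjAntiunitary hK (hθ₀comm (ρ a) (hρC a) ((hmemC _).2 (hfirst a)))
  obtain ⟨θ₁, hθ₁, hθ₁D⟩ := exists_mem_diracOf_eq C hj hε' hJD hθ₀ hη
  obtain ⟨θ₂, hθ₂, hθ₂sa, hθ₂D⟩ := exists_mem_conjTranspose_eq_diracOf_eq C hε' hDsa hθ₁ hθ₁D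
  obtain ⟨θ, hθ, hθsa, hθΓ, hθD⟩ := exists_mem_graded_diracOf_eq C hK hε'' hσ hΓC hΓsa hΓ2 hJΓ
    ((mul_eq_smul_mul_iff_mul_mul_eq_smul hΓ2 σ D).1 hDΓ) hθ₂ hθ₂sa hθ₂D
  exact ⟨θ, hθsa, (hmemC θ).1 hθ, (mul_eq_smul_mul_iff_mul_mul_eq_smul hΓ2 σ θ).2 hθΓ, hθD.symm⟩

end DiracOf

theorem dirac_operator_decomposition_general
    (N : ℕ) (A : Type) [Ring A] [StarRing A] [Algebra ℝ A]
    (s : ℤ) (ε ε' ε'' : ℂ)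
    (hε : ε = 1 ∨ ε = -1) (hε' : ε' = 1 ∨ ε' = -1) (hε'' : ε'' = 1 ∨ ε'' = -1)
    (ρ : A →ₐ[ℝ] Matrix (Fin N) (Fin N) ℂ)
    (hρstar : ∀ a, ρ (star a) = (ρ a)ᴴ)
    (K : Matrix (Fin N) (Fin N) ℂ)
    (hK2 : K * Kᴴ = 1)
    (hJ2 : K * K.map (starRingEnd ℂ) = ε • (1 : Matrix (Fin N) (Fin N) ℂ))
    (Γ : Matrix (Fin N) (Fin N) ℂ)
    (hΓsa : Γᴴ = Γ) (hΓ2 : Γ * Γ = 1)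
    (hΓρ : ∀ a, Γ * ρ a = ρ a * Γ)
    (hJΓ : K * Γ.map (starRingEnd ℂ) = ε'' • (Γ * K))
    -- zeroth-order (bimodule) condition
    (hbimod : ∀ a b : A,
      Commute (ρ a) (K * (ρ b).map (starRingEnd ℂ) * Kᴴ))
    (D : Matrix (Fin N) (Fin N) ℂ)
    (hDsa : Dᴴ = D)
    (hDΓeven : Even s → D * Γ = -(Γ * D))
    (hDΓodd : ¬ Even s → D * Γ = Γ * D)
    (hJD : K * D.map (starRingEnd ℂ) = ε' • (D * K))
    -- first-order condition
    (hfirst : ∀ a b : A,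
      Commute (D * ρ a - ρ a * D) (K * (ρ b).map (starRingEnd ℂ) * Kᴴ)) :
    -- decomposition
    (∃ θ : Matrix (Fin N) (Fin N) ℂ,
      θᴴ = θ
      ∧ (∀ a : A, Commute θ (K * (ρ a).map (starRingEnd ℂ) * Kᴴ))
      ∧ (Even s → θ * Γ + Γ * θ = 0)
      ∧ (¬ Even s → θ * Γ = Γ * θ)
      ∧ D = θ + ε' • (K * θ.map (starRingEnd ℂ) * Kᴴ))
    -- converse: any such θ gives a Dirac operator
    ∧ (∀ θ : Matrix (Fin N) (Fin N) ℂ,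
        θᴴ = θ →
        (∀ a : A, Commute θ (K * (ρ a).map (starRingEnd ℂ) * Kᴴ)) →
        (Even s → θ * Γ + Γ * θ = 0) →
        (¬ Even s → θ * Γ = Γ * θ) →
        (θ + ε' • (K * θ.map (starRingEnd ℂ) * Kᴴ))ᴴ
            = θ + ε' • (K * θ.map (starRingEnd ℂ) * Kᴴ)
        ∧ (Even s → (θ + ε' • (K * θ.map (starRingEnd ℂ) * Kᴴ)) * Γ
            = -(Γ * (θ + ε' • (K * θ.map (starRingEnd ℂ) * Kᴴ))))
        ∧ (¬ Even s → (θ + ε' • (K * θ.map (starRingEnd ℂ) * Kᴴ)) * Γ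
            = Γ * (θ + ε' • (K * θ.map (starRingEnd ℂ) * Kᴴ)))
        ∧ K * (θ + ε' • (K * θ.map (starRingEnd ℂ) * Kᴴ)).map (starRingEnd ℂ)
            = ε' • ((θ + ε' • (K * θ.map (starRingEnd ℂ) * Kᴴ)) * K)
        ∧ ∀ a b : A,
            Commute ((θ + ε' • (K * θ.map (starRingEnd ℂ) * Kᴴ)) * ρ a
                - ρ a * (θ + ε' • (K * θ.map (starRingEnd ℂ) * Kᴴ)))
              (K * (ρ b).map (starRingEnd ℂ) * Kᴴ)) := by
  have hK : K ∈ unitaryGroup (Fin N) ℂ := mem_unitaryGroup_iff.mpr hK2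
  have hj := involutive_conjAntiunitary hε hJ2
  have hJΓ' := (mul_map_eq_smul_mul_iff hK ε'' Γ).1 hJΓ
  set σ : ℂ := if Even s then -1 else 1
  have hσ : σ = 1 ∨ σ = -1 := by by_cases hs : Even s <;> simp [σ, hs]
  have hgrading (X : Matrix (Fin N) (Fin N) ℂ) :
      ((Even s → X * Γ = -(Γ * X)) ∧ (¬Even s → X * Γ = Γ * X)) ↔ X * Γ = σ • (Γ * X) :=
    eq_neg_and_eq_iff_eq_ite_smul _ _ _
  simp only [add_eq_zero_iff_eq_neg]
  refine ⟨?_, fun θ hθsa hθρ hθeven hθodd => ?_⟩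
  · obtain ⟨θ, hθsa, hθρ, hθΓ, hD⟩ := exists_diracOf_eq_of_firstOrder ρ
      (fun a => ⟨star a, (hρstar a).symm⟩) hK hj hε' hε'' hσ hΓsa hΓ2 hΓρ hJΓ' hbimod hDsa
      ((hgrading D).1 ⟨hDΓeven, hDΓodd⟩) ((mul_map_eq_smul_mul_iff hK ε' D).1 hJD) hfirst
    exact ⟨θ, hθsa, hθρ, ((hgrading θ).2 hθΓ).1, ((hgrading θ).2 hθΓ).2, hD⟩
  · have hDΓ := (hgrading (diracOf K ε' θ)).2
      (diracOf_mul_eq_smul_mul hK hε'' hσ hΓ2 hJΓ' ((hgrading θ).1 ⟨hθeven, hθodd⟩))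
    exact ⟨(conjTranspose_diracOf hε' θ).trans (congrArg _ hθsa), hDΓ.1, hDΓ.2,
      (mul_map_eq_smul_mul_iff hK ε' _).2 (conjAntiunitary_diracOf hj hε' θ),
      commute_diracOf_mul_sub_mul ρ hK hj hbimod hθρ⟩

/-- Every Dirac operator D of a finite real spectral triple
decomposes as D = θ + ε′JθJ⁻¹ with θ self-adjoint, commuting with the right
action Jρ(a)J⁻¹, and anticommuting (s even) or commuting (s odd) with Γ;
conversely any such θ defines a Dirac operator.  The antilinear real structure
is represented as J(v) = K (star v) with K unitary. -/
theorem dirac_operator_decomposition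
    (N : ℕ) (A : Type) [Ring A] [StarRing A] [Algebra ℝ A] [FiniteDimensional ℝ A]
    (s : ℤ) (ε ε' ε'' : ℂ)
    (hε : ε = 1 ∨ ε = -1) (hε' : ε' = 1 ∨ ε' = -1) (hε'' : ε'' = 1 ∨ ε'' = -1)
    (ρ : A →ₐ[ℝ] Matrix (Fin N) (Fin N) ℂ)
    (hρstar : ∀ a, ρ (star a) = (ρ a)ᴴ)
    (hρinj : Function.Injective ρ)
    (K : Matrix (Fin N) (Fin N) ℂ)
    (hK1 : Kᴴ * K = 1) (hK2 : K * Kᴴ = 1)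
    (hJ2 : K * K.map (starRingEnd ℂ) = ε • (1 : Matrix (Fin N) (Fin N) ℂ))
    (Γ : Matrix (Fin N) (Fin N) ℂ)
    (hΓsa : Γᴴ = Γ) (hΓ2 : Γ * Γ = 1)
    (hΓρ : ∀ a, Γ * ρ a = ρ a * Γ)
    (hJΓ : K * Γ.map (starRingEnd ℂ) = ε'' • (Γ * K))
    -- zeroth-order (bimodule) condition
    (hbimod : ∀ a b : A,
      Commute (ρ a) (K * (ρ b).map (starRingEnd ℂ) * Kᴴ))
    (D : Matrix (Fin N) (Fin N) ℂ)
    (hDsa : Dᴴ = D)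
    (hDΓeven : Even s → D * Γ = -(Γ * D))
    (hDΓodd : ¬ Even s → D * Γ = Γ * D)
    (hJD : K * D.map (starRingEnd ℂ) = ε' • (D * K))
    -- first-order condition
    (hfirst : ∀ a b : A,
      Commute (D * ρ a - ρ a * D) (K * (ρ b).map (starRingEnd ℂ) * Kᴴ)) :
    -- decomposition
    (∃ θ : Matrix (Fin N) (Fin N) ℂ,
      θᴴ = θ
      ∧ (∀ a : A, Commute θ (K * (ρ a).map (starRingEnd ℂ) * Kᴴ))
      ∧ (Even s → θ * Γ + Γ * θ = 0)
      ∧ (¬ Even s → θ * Γ = Γ * θ)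
      ∧ D = θ + ε' • (K * θ.map (starRingEnd ℂ) * Kᴴ))
    -- converse: any such θ gives a Dirac operator
    ∧ (∀ θ : Matrix (Fin N) (Fin N) ℂ,
        θᴴ = θ →
        (∀ a : A, Commute θ (K * (ρ a).map (starRingEnd ℂ) * Kᴴ)) →
        (Even s → θ * Γ + Γ * θ = 0) →
        (¬ Even s → θ * Γ = Γ * θ) →
        (θ + ε' • (K * θ.map (starRingEnd ℂ) * Kᴴ))ᴴ
            = θ + ε' • (K * θ.map (starRingEnd ℂ) * Kᴴ)
        ∧ (Even s → (θ + ε' • (K * θ.map (starRingEnd ℂ) * Kᴴ)) * Γ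
            = -(Γ * (θ + ε' • (K * θ.map (starRingEnd ℂ) * Kᴴ))))
        ∧ (¬ Even s → (θ + ε' • (K * θ.map (starRingEnd ℂ) * Kᴴ)) * Γ
            = Γ * (θ + ε' • (K * θ.map (starRingEnd ℂ) * Kᴴ)))
        ∧ K * (θ + ε' • (K * θ.map (starRingEnd ℂ) * Kᴴ)).map (starRingEnd ℂ)
            = ε' • ((θ + ε' • (K * θ.map (starRingEnd ℂ) * Kᴴ)) * K)
        ∧ ∀ a b : A,
            Commute ((θ + ε' • (K * θ.map (starRingEnd ℂ) * Kᴴ)) * ρ a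
                - ρ a * (θ + ε' • (K * θ.map (starRingEnd ℂ) * Kᴴ)))
              (K * (ρ b).map (starRingEnd ℂ) * Kᴴ)) :=
  dirac_operator_decomposition_general N A s ε ε' ε'' hε hε' hε'' ρ hρstar K hK2 hJ2 Γ hΓsa hΓ2 hΓρ
    hJΓ hbimod D hDsa hDΓeven hDΓodd hJD hfirst
end

section
/- Every unitary bimodule map u on a type (0,0) matrix geometry H₀ (whose irreducible sub-bimodules are pairwise inequivalent) satisfying u* = J₀uJ₀⁻¹ has a square root: there exists a unitary bimodule map r with r² = u and r* = J₀rJ₀⁻¹. -/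
/-!
The square root is a polynomial in `u`. The spectrum of `u` is finite and lies on the unit
circle, so interpolating `z ↦ z ^ (1/2)` on it gives `p` with `r = p(u)` unitary and `r² = u`
by the continuous functional calculus. As a polynomial in `u`, `r` commutes with whatever `u`
commutes with. Finally both `X ↦ Xᴴ` and `X ↦ K X̄ Kᴴ` send `p(u)` to `p̄` evaluated at the
image of `u`, and the two images of `u` agree.
-/

open Matrix Polynomial

theorem Commute.aeval_left {R A : Type*} [CommSemiring R] [Semiring A] [Algebra R A] {a b : A}
    (h : Commute a b) (p : R[X]) : Commute (aeval a p) b :=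
  (Algebra.commute_of_mem_adjoin_singleton_of_commute (aeval_mem_adjoin_singleton R a) h.symm).symm

theorem Polynomial.star_aeval {R A : Type*} [CommSemiring R] [StarRing R] [Semiring A]
    [StarRing A] [Algebra R A] [StarModule R A] (a : A) (p : R[X]) :
    star (aeval a p) = aeval (star a) (p.map (starRingEnd R)) := by
  induction p using Polynomial.induction_on' with
  | add p q hp hq => simp only [map_add, Polynomial.map_add, star_add, hp, hq]
  | monomial n c =>
    rw [aeval_monomial, Polynomial.map_monomial, aeval_monomial, star_mul, star_pow,
      ← algebraMap_star_comm, starRingEnd_apply]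
    exact (Algebra.commutes _ _).symm

theorem Polynomial.star_aeval_eq_of_star_eq {R A : Type*} [CommSemiring R] [StarRing R]
    [Semiring A] [StarRing A] [Algebra R A] [StarModule R A] {φ : A →+* A}
    (hφ : ∀ c : R, φ (algebraMap R A c) = algebraMap R A (star c)) {a : A}
    (ha : star a = φ a) (p : R[X]) : star (aeval a p) = φ (aeval a p) := by
  rw [star_aeval, aeval_def, aeval_def, hom_eval₂, eval₂_map, ha]
  congr 1
  ext c
  exact (hφ c).symm

theorem Matrix.conjTranspose_aeval_eq_of_conjTranspose_eq {n : Type*} [Fintype n]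
    [DecidableEq n] {K u : Matrix n n ℂ} (hK : K ∈ unitary (Matrix n n ℂ))
    (hu : uᴴ = K * u.map (starRingEnd ℂ) * Kᴴ) (p : ℂ[X]) :
    (aeval u p)ᴴ = K * (aeval u p).map (starRingEnd ℂ) * Kᴴ :=
  star_aeval_eq_of_star_eq
    (φ := (Unitary.conjStarAlgAut ℂ _ ⟨K, hK⟩ : Matrix n n ℂ →+* Matrix n n ℂ).comp
      (RingHom.mapMatrix (starRingEnd ℂ)))
    (fun c => by
      have : (algebraMap ℂ (Matrix n n ℂ) c).map (starRingEnd ℂ) = algebraMap ℂ _ (star c) := by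
        simp [algebraMap_eq_diagonal, diagonal_map]
      simpa [this] using AlgHomClass.commutes (Unitary.conjStarAlgAut ℂ _ ⟨K, hK⟩) (star c))
    hu p

theorem exists_aeval_eq_cfc_of_finite_spectrum {R A : Type*} {p : A → Prop} [Field R]
    [StarRing R] [MetricSpace R] [IsTopologicalRing R] [ContinuousStar R] [TopologicalSpace A]
    [Ring A] [StarRing A] [Algebra R A] [ContinuousFunctionalCalculus R A p] (f : R → R) {a : A}
    (hfin : (spectrum R a).Finite) (ha : p a := by cfc_tac) :
    ∃ q : R[X], aeval a q = cfc f a := by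
  classical
  refine ⟨Lagrange.interpolate hfin.toFinset id f, ?_⟩
  rw [← cfc_polynomial _ a]
  exact cfc_congr fun z hz =>
    Lagrange.eval_interpolate_at_node (v := id) f (Set.injOn_id _) (hfin.mem_toFinset.mpr hz)

section SquareRoot

variable {A : Type*} [TopologicalSpace A] [Ring A] [StarRing A] [Algebra ℂ A]
  [ContinuousFunctionalCalculus ℂ A IsStarNormal] {u : A}

-- A finite spectrum makes the discontinuity of `z ↦ z ^ (1/2)` along the branch cut harmless.
theorem cfc_cpow_inv_two_mul_self (hfin : (spectrum ℂ u).Finite)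
    (hu : IsStarNormal u := by cfc_tac) :
    cfc (fun z : ℂ => z ^ (2⁻¹ : ℂ)) u * cfc (fun z : ℂ => z ^ (2⁻¹ : ℂ)) u = u := by
  rw [← cfc_mul _ _ u (hfin.continuousOn _) (hfin.continuousOn _)]
  conv_rhs => rw [← cfc_id' ℂ u]
  refine cfc_congr fun z _ => ?_
  simpa [sq] using Complex.cpow_nat_inv_pow z two_ne_zero

theorem cfc_cpow_inv_two_mem_unitary (hu : u ∈ unitary A) (hfin : (spectrum ℂ u).Finite) :
    cfc (fun z : ℂ => z ^ (2⁻¹ : ℂ)) u ∈ unitary A := by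
  have := isStarNormal_of_mem_unitary hu
  rw [cfc_unitary_iff _ u (hf := hfin.continuousOn _)]
  intro z hz
  have hz1 : ‖z‖ = 1 :=
    CStarRing.norm_of_mem_unitary (spectrum_subset_unitary_of_mem_unitary hu hz)
  have hsqrt1 : ‖z ^ (2⁻¹ : ℂ)‖ = 1 := by
    simpa [hz1] using Complex.norm_cpow_real z 2⁻¹
  rw [RCLike.star_def, Complex.conj_mul', hsqrt1]
  norm_num

end SquareRoot

open scoped Matrix.Norms.L2Operator

/-- `J₀` is modelled as `v ↦ K v̄` with `K` unitary, so `J₀ X J₀⁻¹ = K X̄ Kᴴ`. -/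
theorem unitary_bimodule_map_sqrt_general
    (N : ℕ) (A : Type)
    (L R : A → Matrix (Fin N) (Fin N) ℂ)
    (K : Matrix (Fin N) (Fin N) ℂ)
    (hK1 : Kᴴ * K = 1) (hK2 : K * Kᴴ = 1)
    (u : Matrix (Fin N) (Fin N) ℂ)
    (hu1 : uᴴ * u = 1) (hu2 : u * uᴴ = 1)
    (hubi : ∀ a, Commute u (L a) ∧ Commute u (R a))
    (huJ : uᴴ = K * u.map (starRingEnd ℂ) * Kᴴ) :
    ∃ r : Matrix (Fin N) (Fin N) ℂ,
      rᴴ * r = 1 ∧ r * rᴴ = 1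
      ∧ (∀ a, Commute r (L a) ∧ Commute r (R a))
      ∧ r * r = u
      ∧ rᴴ = K * r.map (starRingEnd ℂ) * Kᴴ := by
  have hu : u ∈ unitary (Matrix (Fin N) (Fin N) ℂ) := ⟨hu1, hu2⟩
  have := isStarNormal_of_mem_unitary hu
  obtain ⟨p, hp⟩ :=
    exists_aeval_eq_cfc_of_finite_spectrum (fun z : ℂ => z ^ (2⁻¹ : ℂ)) u.finite_spectrum
  have hr : aeval u p ∈ unitary (Matrix (Fin N) (Fin N) ℂ) :=
    hp ▸ cfc_cpow_inv_two_mem_unitary hu u.finite_spectrum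
  refine ⟨aeval u p, hr.1, hr.2, fun a => ⟨(hubi a).1.aeval_left p, (hubi a).2.aeval_left p⟩,
    ?_, Matrix.conjTranspose_aeval_eq_of_conjTranspose_eq ⟨hK1, hK2⟩ huJ p⟩
  rw [hp, cfc_cpow_inv_two_mul_self u.finite_spectrum]

/-- On a type (0,0) matrix geometry whose irreducible
sub-bimodules are pairwise inequivalent (encoded by the commutant of the pair
of actions being commutative), every unitary bimodule map u with
u* = J₀uJ₀⁻¹ admits a square root r with the same properties.  The antiunitary
J₀ is represented as v ↦ K (star v) with K unitary, and it exchanges the left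
and right actions. -/
theorem unitary_bimodule_map_sqrt
    (N : ℕ) (A : Type) [Ring A] [StarRing A]
    (L R : A → Matrix (Fin N) (Fin N) ℂ)
    (hLmul : ∀ a b, L (a * b) = L a * L b) (hL1 : L 1 = 1)
    (hLadd : ∀ a b, L (a + b) = L a + L b)
    (hLstar : ∀ a, L (star a) = (L a)ᴴ)
    (hRmul : ∀ a b, R (a * b) = R b * R a) (hR1 : R 1 = 1)
    (hRadd : ∀ a b, R (a + b) = R a + R b)
    (hRstar : ∀ a, R (star a) = (R a)ᴴ)
    (hLR : ∀ a b, Commute (L a) (R b))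
    (K : Matrix (Fin N) (Fin N) ℂ)
    (hK1 : Kᴴ * K = 1) (hK2 : K * Kᴴ = 1)
    -- J₀ exchanges the left and right actions
    (hJexch : ∀ a, K * (L a).map (starRingEnd ℂ) * Kᴴ = R (star a))
    -- the irreducible sub-bimodules are pairwise inequivalent:
    -- the commutant of the two actions is commutative
    (hmultfree : ∀ u v : Matrix (Fin N) (Fin N) ℂ,
      (∀ a, Commute u (L a) ∧ Commute u (R a)) →
      (∀ a, Commute v (L a) ∧ Commute v (R a)) → Commute u v)
    (u : Matrix (Fin N) (Fin N) ℂ)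
    (hu1 : uᴴ * u = 1) (hu2 : u * uᴴ = 1)
    (hubi : ∀ a, Commute u (L a) ∧ Commute u (R a))
    (huJ : uᴴ = K * u.map (starRingEnd ℂ) * Kᴴ) :
    ∃ r : Matrix (Fin N) (Fin N) ℂ,
      rᴴ * r = 1 ∧ r * rᴴ = 1
      ∧ (∀ a, Commute r (L a) ∧ Commute r (R a))
      ∧ r * r = u
      ∧ rᴴ = K * r.map (starRingEnd ℂ) * Kᴴ :=
  unitary_bimodule_map_sqrt_general N A L R K hK1 hK2 u hu1 hu2 hubi huJ
end

section
/- The Grosse–Presnajder operator d̃ = 1 + Σ_{j<k} σʲσᵏ ⊗ [L_{jk}, ·] equals c − c₁ − c₂ + 1, where c₁ = −Σ_{j<k}𝔰_{jk}𝔰_{jk}, c₂ = −Σ_{j<k}Λ_{jk}Λ_{jk}, and c = −Σ_{j<k}(𝔰_{jk}+Λ_{jk})², with 𝔰_{jk} = −(σʲσᵏ−σᵏσʲ)/4 the spin generators and Λ_{jk} = [L_{jk},·] the adjoint action. -/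
/- Since 𝔰_{jk} acts on the spinor factor and Λ_{jk} on the matrix factor, they commute, so the
cross terms give c − c₁ − c₂ = −2 Σ_{j<k} 𝔰_{jk}Λ_{jk}. For j ≠ k the gamma matrices anticommute,
whence 𝔰_{jk} = −σʲσᵏ/2 and −2 𝔰_{jk}Λ_{jk} = σʲσᵏ ⊗ [L_{jk}, ·]. -/

open Matrix

/-- The Hilbert space ℂ²⊗M(n,ℂ), encoded as pairs of n×n matrices. -/
abbrev HGP (n : ℕ) := Fin 2 → Matrix (Fin n) (Fin n) ℂ

/-- The action of a 2×2 matrix on the spinor factor of ℂ²⊗M(n,ℂ). -/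
noncomputable def opV {n : ℕ} (m : Matrix (Fin 2) (Fin 2) ℂ) (ψ : HGP n) : HGP n :=
  fun i => ∑ j, m i j • ψ j

/-- The adjoint action m ↦ [X,m] on the matrix factor. -/
noncomputable def adL {n : ℕ} (X : Matrix (Fin n) (Fin n) ℂ) (ψ : HGP n) : HGP n :=
  fun i => X * ψ i - ψ i * X

/-- The spin generators 𝔰_{jk} = −(σʲσᵏ − σᵏσʲ)/4. -/
noncomputable def spinGen (σ : Fin 3 → Matrix (Fin 2) (Fin 2) ℂ) (j k : Fin 3) :
    Matrix (Fin 2) (Fin 2) ℂ :=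
  (-(1/4) : ℂ) • (σ j * σ k - σ k * σ j)

/-- The set of ordered pairs j < k in {1,2,3}. -/
def pairs3 : Finset (Fin 3 × Fin 3) := Finset.univ.filter (fun p => p.1 < p.2)

theorem opV_adL_comm {n : ℕ} (m : Matrix (Fin 2) (Fin 2) ℂ) (X : Matrix (Fin n) (Fin n) ℂ)
    (ψ : HGP n) : opV m (adL X ψ) = adL X (opV m ψ) := by
  funext i
  simp only [opV, adL, smul_sub, Finset.sum_sub_distrib, Matrix.mul_sum, Matrix.sum_mul,
    Matrix.mul_smul, Matrix.smul_mul]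

theorem opV_smul {n : ℕ} (c : ℂ) (m : Matrix (Fin 2) (Fin 2) ℂ) (ψ : HGP n) :
    opV (c • m) ψ = c • opV m ψ := by
  funext i
  simp [opV, smul_smul]

theorem spinGen_eq_of_anticomm {σ : Fin 3 → Matrix (Fin 2) (Fin 2) ℂ} {j k : Fin 3}
    (h : σ j * σ k + σ k * σ j = 0) : spinGen σ j k = (-(1 / 2) : ℂ) • (σ j * σ k) := by
  rw [spinGen, eq_neg_of_add_eq_zero_right h]
  module

theorem opV_mul_adL_of_anticomm {n : ℕ} {σ : Fin 3 → Matrix (Fin 2) (Fin 2) ℂ}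
    {j k : Fin 3} (h : σ j * σ k + σ k * σ j = 0) (X : Matrix (Fin n) (Fin n) ℂ) (ψ : HGP n) :
    opV (σ j * σ k) (adL X ψ)
      = -(opV (spinGen σ j k) (adL X ψ) + adL X (opV (spinGen σ j k) ψ)) := by
  rw [spinGen_eq_of_anticomm h, opV_smul, ← opV_adL_comm, opV_smul]
  module

theorem grosse_presnajder_casimir_general
    (n : ℕ) (σ : Fin 3 → Matrix (Fin 2) (Fin 2) ℂ)
    (hσ : ∀ j k, σ j * σ k + σ k * σ j =
      if j = k then (-2 : ℂ) • (1 : Matrix (Fin 2) (Fin 2) ℂ) else 0)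
    (L : Fin 3 → Fin 3 → Matrix (Fin n) (Fin n) ℂ) :
    ∀ ψ : HGP n,
      (ψ + ∑ p ∈ pairs3, opV (σ p.1 * σ p.2) (adL (L p.1 p.2) ψ))
      = -- c
        (-(∑ p ∈ pairs3,
            (opV (spinGen σ p.1 p.2) (opV (spinGen σ p.1 p.2) ψ)
              + opV (spinGen σ p.1 p.2) (adL (L p.1 p.2) ψ)
              + adL (L p.1 p.2) (opV (spinGen σ p.1 p.2) ψ)
              + adL (L p.1 p.2) (adL (L p.1 p.2) ψ))))
        -- − c₁
        - (-(∑ p ∈ pairs3, opV (spinGen σ p.1 p.2) (opV (spinGen σ p.1 p.2) ψ)))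
        -- − c₂
        - (-(∑ p ∈ pairs3, adL (L p.1 p.2) (adL (L p.1 p.2) ψ)))
        + ψ := by
  intro ψ
  have cross : ∀ p ∈ pairs3, opV (σ p.1 * σ p.2) (adL (L p.1 p.2) ψ)
      = -(opV (spinGen σ p.1 p.2) (adL (L p.1 p.2) ψ)
          + adL (L p.1 p.2) (opV (spinGen σ p.1 p.2) ψ)) := by
    intro p hp
    have hne : p.1 ≠ p.2 := (Finset.mem_filter.mp hp).2.ne
    exact opV_mul_adL_of_anticomm (by simpa [hne] using hσ p.1 p.2) _ _
  rw [Finset.sum_congr rfl cross]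
  simp only [Finset.sum_add_distrib, Finset.sum_neg_distrib]
  abel

/-- The Grosse–Presnajder operator
d̃ = 1 + Σ_{j<k} σʲσᵏ⊗[L_{jk},·] equals c − c₁ − c₂ + 1, where
c₁ = −Σ_{j<k}𝔰_{jk}², c₂ = −Σ_{j<k}Λ_{jk}², c = −Σ_{j<k}(𝔰_{jk}+Λ_{jk})²,
with 𝔰_{jk} the spin generators and Λ_{jk} = [L_{jk},·]. -/
theorem grosse_presnajder_casimir
    (n : ℕ) (σ : Fin 3 → Matrix (Fin 2) (Fin 2) ℂ)
    (hσ : ∀ j k, σ j * σ k + σ k * σ j =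
      if j = k then (-2 : ℂ) • (1 : Matrix (Fin 2) (Fin 2) ℂ) else 0)
    (L : Fin 3 → Fin 3 → Matrix (Fin n) (Fin n) ℂ)
    (hLanti : ∀ j k, L j k = -L k j)
    (hLrel : ∀ j k l m, L j k * L l m - L l m * L j k =
      (if k = l then (1:ℂ) else 0) • L j m - (if k = m then (1:ℂ) else 0) • L j l
        - (if j = l then (1:ℂ) else 0) • L k m + (if j = m then (1:ℂ) else 0) • L k l) :
    ∀ ψ : HGP n,
      (ψ + ∑ p ∈ pairs3, opV (σ p.1 * σ p.2) (adL (L p.1 p.2) ψ))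
      = -- c
        (-(∑ p ∈ pairs3,
            (opV (spinGen σ p.1 p.2) (opV (spinGen σ p.1 p.2) ψ)
              + opV (spinGen σ p.1 p.2) (adL (L p.1 p.2) ψ)
              + adL (L p.1 p.2) (opV (spinGen σ p.1 p.2) ψ)
              + adL (L p.1 p.2) (adL (L p.1 p.2) ψ))))
        -- − c₁
        - (-(∑ p ∈ pairs3, opV (spinGen σ p.1 p.2) (opV (spinGen σ p.1 p.2) ψ)))
        -- − c₂
        - (-(∑ p ∈ pairs3, adL (L p.1 p.2) (adL (L p.1 p.2) ψ)))
        + ψ :=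
  grosse_presnajder_casimir_general n σ hσ L
end

section
/- Let D be the Dirac operator of the fuzzy sphere on ℂ⁴⊗M(n,ℂ), D = γ⁰ + Σ_{j<k} γ⁰γʲγᵏ⊗[L_{jk},·], with the type (1,3) gamma matrices written in block form γ⁰ = [[0,1],[1,0]], γᵃ = [[0,iσᵃ],[−iσᵃ,0]]. Then conjugation by W = (1/√2)[[1,1],[−1,1]] block-diagonalises D as WDW⁻¹ = diag(d̃, −d̃), where d̃ is the Grosse–Presnajder operator; consequently the spectrum of D is symmetric about 0. -/
open Matrix

/-- The Hilbert space ℂ⁴⊗M(n,ℂ), the spinor index split into two blocks. -/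
abbrev H4 (n : ℕ) := (Fin 2 ⊕ Fin 2) → Matrix (Fin n) (Fin n) ℂ

/-- Action of a 2×2 spinor matrix on ℂ²⊗M(n,ℂ). -/
noncomputable def opVE (n : ℕ) (m : Matrix (Fin 2) (Fin 2) ℂ) :
    Module.End ℂ (HGP n) :=
  LinearMap.pi (fun i => ∑ j, m i j • LinearMap.proj j)

/-- Action of a 4×4 spinor matrix on ℂ⁴⊗M(n,ℂ). -/
noncomputable def opV4E (n : ℕ) (m : Matrix (Fin 2 ⊕ Fin 2) (Fin 2 ⊕ Fin 2) ℂ) :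
    Module.End ℂ (H4 n) :=
  LinearMap.pi (fun i => ∑ j, m i j • LinearMap.proj j)

/-- The adjoint action m ↦ [X,m] on ℂ²⊗M(n,ℂ). -/
noncomputable def adLE (n : ℕ) (X : Matrix (Fin n) (Fin n) ℂ) :
    Module.End ℂ (HGP n) :=
  LinearMap.pi (fun i =>
    (LinearMap.mulLeft ℂ X - LinearMap.mulRight ℂ X).comp (LinearMap.proj i))

/-- The adjoint action m ↦ [X,m] on ℂ⁴⊗M(n,ℂ). -/
noncomputable def adL4E (n : ℕ) (X : Matrix (Fin n) (Fin n) ℂ) :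
    Module.End ℂ (H4 n) :=
  LinearMap.pi (fun i =>
    (LinearMap.mulLeft ℂ X - LinearMap.mulRight ℂ X).comp (LinearMap.proj i))

/-- The Grosse–Presnajder operator d̃ = 1 + Σ_{j<k} σʲσᵏ ⊗ [L_{jk},·]. -/
noncomputable def GPop (n : ℕ) (σ : Fin 3 → Matrix (Fin 2) (Fin 2) ℂ)
    (L : Fin 3 → Fin 3 → Matrix (Fin n) (Fin n) ℂ) : Module.End ℂ (HGP n) :=
  1 + ∑ p ∈ pairs3, (opVE n (σ p.1 * σ p.2)) * (adLE n (L p.1 p.2))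

/-- The type (1,3) gamma matrix γ⁰ in block form. -/
noncomputable def gamma0 : Matrix (Fin 2 ⊕ Fin 2) (Fin 2 ⊕ Fin 2) ℂ :=
  Matrix.fromBlocks 0 1 1 0

/-- The type (1,3) gamma matrices γᵃ in block form. -/
noncomputable def gammaA (σ : Fin 3 → Matrix (Fin 2) (Fin 2) ℂ) (a : Fin 3) :
    Matrix (Fin 2 ⊕ Fin 2) (Fin 2 ⊕ Fin 2) ℂ :=
  Matrix.fromBlocks 0 (Complex.I • σ a) (-(Complex.I • σ a)) 0

/-- The fuzzy sphere Dirac operator D = γ⁰ + Σ_{j<k} γ⁰γʲγᵏ ⊗ [L_{jk},·]. -/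
noncomputable def fuzzyDirac (n : ℕ) (σ : Fin 3 → Matrix (Fin 2) (Fin 2) ℂ)
    (L : Fin 3 → Fin 3 → Matrix (Fin n) (Fin n) ℂ) : Module.End ℂ (H4 n) :=
  opV4E n gamma0 + ∑ p ∈ pairs3,
    (opV4E n (gamma0 * gammaA σ p.1 * gammaA σ p.2)) * (adL4E n (L p.1 p.2))

/-- The change-of-basis matrix W = (1/√2)[[1,1],[−1,1]]. -/
noncomputable def Wmat : Matrix (Fin 2 ⊕ Fin 2) (Fin 2 ⊕ Fin 2) ℂ :=
  (((Real.sqrt 2 : ℝ) : ℂ))⁻¹ • Matrix.fromBlocks 1 1 (-1) 1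

/-- The inverse of W. -/
noncomputable def WmatInv : Matrix (Fin 2 ⊕ Fin 2) (Fin 2 ⊕ Fin 2) ℂ :=
  (((Real.sqrt 2 : ℝ) : ℂ))⁻¹ • Matrix.fromBlocks 1 (-1) 1 1

/-!
Both γ⁰ and γ⁰γʲγᵏ are block off-diagonal, of the form [[0,A],[A,0]] with A = 1 resp.
A = σʲσᵏ, and spinor matrices commute with the adjoint actions [L_{jk},·]. Hence conjugating D
by a spinor matrix just conjugates these coefficients. Conjugation by W sends [[0,A],[A,0]] to
diag(A,−A), giving WDW⁻¹ = diag(d̃,−d̃); conjugation by the chirality χ = diag(1,−1) sends it to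
its negative, so χDχ = −D and the involution χ maps μ-eigenvectors of D to (−μ)-eigenvectors.
-/

theorem Module.End.HasEigenvalue.neg_of_conj_eq_neg {R M : Type*} [CommRing R]
    [AddCommGroup M] [Module R M] {f g : Module.End R M} (hg : g * g = 1)
    (hfg : g * f * g = -f) {μ : R} (hμ : f.HasEigenvalue μ) : f.HasEigenvalue (-μ) := by
  obtain ⟨ψ, hψ, hψ0⟩ := hμ.exists_hasEigenvector
  have hfψ : f ψ = μ • ψ := Module.End.mem_eigenspace_iff.1 hψ
  have hgg : ∀ v, g (g v) = v := fun v => by rw [← Module.End.mul_apply, hg, Module.End.one_apply]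
  refine Module.End.hasEigenvalue_of_hasEigenvector (x := g ψ)
    ⟨Module.End.mem_eigenspace_iff.2 ?_, fun h => hψ0 (by rw [← hgg ψ, h, map_zero])⟩
  calc f (g ψ) = g ((g * f * g) ψ) := by simp only [Module.End.mul_apply, hgg]
    _ = (-μ) • g ψ := by rw [hfg, LinearMap.neg_apply, hfψ, map_neg, map_smul, neg_smul]

section SpinorAction

variable {n : ℕ}

lemma opVE_apply (m : Matrix (Fin 2) (Fin 2) ℂ) (ψ : HGP n) (i : Fin 2) :
    opVE n m ψ i = ∑ j, m i j • ψ j := by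
  simp [opVE]

lemma opV4E_apply (m : Matrix (Fin 2 ⊕ Fin 2) (Fin 2 ⊕ Fin 2) ℂ) (ψ : H4 n)
    (i : Fin 2 ⊕ Fin 2) : opV4E n m ψ i = ∑ j, m i j • ψ j := by
  simp [opV4E]

lemma adLE_apply (X : Matrix (Fin n) (Fin n) ℂ) (ψ : HGP n) (i : Fin 2) :
    adLE n X ψ i = X * ψ i - ψ i * X := by
  simp [adLE]

lemma adL4E_apply (X : Matrix (Fin n) (Fin n) ℂ) (ψ : H4 n) (i : Fin 2 ⊕ Fin 2) :
    adL4E n X ψ i = X * ψ i - ψ i * X := by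
  simp [adL4E]

lemma opVE_one : opVE n 1 = 1 := by
  refine LinearMap.ext fun ψ => funext fun i => ?_
  simp [opVE_apply, Matrix.one_apply, ite_smul]

lemma opVE_neg (m : Matrix (Fin 2) (Fin 2) ℂ) : opVE n (-m) = -opVE n m := by
  refine LinearMap.ext fun ψ => funext fun i => ?_
  simp [opVE_apply, neg_smul]

lemma opV4E_one : opV4E n 1 = 1 := by
  refine LinearMap.ext fun ψ => funext fun i => ?_
  simp [opV4E_apply, Matrix.one_apply, ite_smul]

lemma opV4E_neg (m : Matrix (Fin 2 ⊕ Fin 2) (Fin 2 ⊕ Fin 2) ℂ) : opV4E n (-m) = -opV4E n m := by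
  refine LinearMap.ext fun ψ => funext fun i => ?_
  simp [opV4E_apply, neg_smul]

lemma opV4E_mul (A B : Matrix (Fin 2 ⊕ Fin 2) (Fin 2 ⊕ Fin 2) ℂ) :
    opV4E n (A * B) = opV4E n A * opV4E n B := by
  refine LinearMap.ext fun ψ => funext fun i => ?_
  simp only [Module.End.mul_apply, opV4E_apply, Matrix.mul_apply, Finset.sum_smul,
    Finset.smul_sum, smul_smul]
  exact Finset.sum_comm

lemma opV4E_commute_adL4E (m : Matrix (Fin 2 ⊕ Fin 2) (Fin 2 ⊕ Fin 2) ℂ)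
    (X : Matrix (Fin n) (Fin n) ℂ) : Commute (opV4E n m) (adL4E n X) := by
  refine LinearMap.ext fun ψ => funext fun i => ?_
  simp only [Module.End.mul_apply, opV4E_apply, adL4E_apply, Finset.mul_sum, Finset.sum_mul,
    Matrix.mul_smul, Matrix.smul_mul, smul_sub, Finset.sum_sub_distrib]

lemma opV4E_fromBlocks_apply_inl (A B : Matrix (Fin 2) (Fin 2) ℂ) (ψ : H4 n) (i : Fin 2) :
    opV4E n (Matrix.fromBlocks A 0 0 B) ψ (Sum.inl i) = opVE n A (fun j => ψ (Sum.inl j)) i := by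
  simp [opV4E_apply, opVE_apply, Fintype.sum_sum_type]

lemma opV4E_fromBlocks_apply_inr (A B : Matrix (Fin 2) (Fin 2) ℂ) (ψ : H4 n) (i : Fin 2) :
    opV4E n (Matrix.fromBlocks A 0 0 B) ψ (Sum.inr i) = opVE n B (fun j => ψ (Sum.inr j)) i := by
  simp [opV4E_apply, opVE_apply, Fintype.sum_sum_type]

lemma adL4E_apply_comp (X : Matrix (Fin n) (Fin n) ℂ) (ψ : H4 n) (f : Fin 2 → Fin 2 ⊕ Fin 2) :
    (fun j => adL4E n X ψ (f j)) = adLE n X (fun j => ψ (f j)) := by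
  ext1 j
  simp [adL4E_apply, adLE_apply]

lemma opV4E_mul_dirac_mul_opV4E {ι : Type*} (s : Finset ι)
    (P Q X : Matrix (Fin 2 ⊕ Fin 2) (Fin 2 ⊕ Fin 2) ℂ)
    (Y : ι → Matrix (Fin 2 ⊕ Fin 2) (Fin 2 ⊕ Fin 2) ℂ) (Z : ι → Matrix (Fin n) (Fin n) ℂ) :
    opV4E n P * (opV4E n X + ∑ p ∈ s, opV4E n (Y p) * adL4E n (Z p)) * opV4E n Q
      = opV4E n (P * X * Q) + ∑ p ∈ s, opV4E n (P * Y p * Q) * adL4E n (Z p) := by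
  simp only [mul_add, add_mul, Finset.mul_sum, Finset.sum_mul, opV4E_mul]
  congr 1
  refine Finset.sum_congr rfl fun p _ => ?_
  rw [mul_assoc, mul_assoc, (opV4E_commute_adL4E Q (Z p)).symm.eq]
  simp only [mul_assoc]

end SpinorAction

section SpinorMatrices

lemma inv_ofReal_sqrt_two_mul_self :
    ((Real.sqrt 2 : ℝ) : ℂ)⁻¹ * ((Real.sqrt 2 : ℝ) : ℂ)⁻¹ = 2⁻¹ := by
  rw [← mul_inv, ← Complex.ofReal_mul, Real.mul_self_sqrt zero_le_two]
  norm_num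

lemma Wmat_mul_WmatInv : Wmat * WmatInv = 1 := by
  rw [Wmat, WmatInv, Matrix.smul_mul, Matrix.mul_smul, smul_smul, inv_ofReal_sqrt_two_mul_self,
    Matrix.fromBlocks_multiply, ← Matrix.fromBlocks_one]
  simp only [Matrix.fromBlocks_smul, Matrix.one_mul, Matrix.neg_mul]
  congr 1 <;> module

lemma WmatInv_mul_Wmat : WmatInv * Wmat = 1 := by
  rw [Wmat, WmatInv, Matrix.smul_mul, Matrix.mul_smul, smul_smul, inv_ofReal_sqrt_two_mul_self,
    Matrix.fromBlocks_multiply, ← Matrix.fromBlocks_one]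
  simp only [Matrix.fromBlocks_smul, Matrix.one_mul, Matrix.neg_mul]
  congr 1 <;> module

lemma Wmat_mul_fromBlocks_mul_WmatInv (A : Matrix (Fin 2) (Fin 2) ℂ) :
    Wmat * Matrix.fromBlocks 0 A A 0 * WmatInv = Matrix.fromBlocks A 0 0 (-A) := by
  rw [Wmat, WmatInv, Matrix.smul_mul, Matrix.smul_mul, Matrix.mul_smul, smul_smul,
    inv_ofReal_sqrt_two_mul_self]
  simp only [Matrix.fromBlocks_multiply, Matrix.fromBlocks_smul, Matrix.one_mul, Matrix.mul_one,
    Matrix.mul_zero, Matrix.neg_mul, Matrix.mul_neg, zero_add, add_zero]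
  congr 1 <;> module

lemma gamma0_mul_gammaA_mul_gammaA (σ : Fin 3 → Matrix (Fin 2) (Fin 2) ℂ) (a b : Fin 3) :
    gamma0 * gammaA σ a * gammaA σ b = Matrix.fromBlocks 0 (σ a * σ b) (σ a * σ b) 0 := by
  simp [gamma0, gammaA, Matrix.fromBlocks_multiply, smul_smul]

def chirality : Matrix (Fin 2 ⊕ Fin 2) (Fin 2 ⊕ Fin 2) ℂ := Matrix.fromBlocks 1 0 0 (-1)

lemma chirality_mul_self : chirality * chirality = 1 := by
  simp [chirality, Matrix.fromBlocks_multiply]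

lemma chirality_mul_fromBlocks_mul_chirality (A : Matrix (Fin 2) (Fin 2) ℂ) :
    chirality * Matrix.fromBlocks 0 A A 0 * chirality = -Matrix.fromBlocks 0 A A 0 := by
  simp [chirality, Matrix.fromBlocks_multiply, Matrix.fromBlocks_neg]

end SpinorMatrices

section FuzzyDirac

variable {n : ℕ} (σ : Fin 3 → Matrix (Fin 2) (Fin 2) ℂ) (L : Fin 3 → Fin 3 → Matrix (Fin n) (Fin n) ℂ)

lemma fuzzyDirac_eq_offDiag : fuzzyDirac n σ L = opV4E n (Matrix.fromBlocks 0 1 1 0) +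
    ∑ p ∈ pairs3, opV4E n (Matrix.fromBlocks 0 (σ p.1 * σ p.2) (σ p.1 * σ p.2) 0)
      * adL4E n (L p.1 p.2) := by
  simp only [fuzzyDirac, gamma0_mul_gammaA_mul_gammaA]
  rfl

lemma Wmat_conj_fuzzyDirac : opV4E n Wmat * fuzzyDirac n σ L * opV4E n WmatInv =
    opV4E n (Matrix.fromBlocks 1 0 0 (-1)) +
    ∑ p ∈ pairs3, opV4E n (Matrix.fromBlocks (σ p.1 * σ p.2) 0 0 (-(σ p.1 * σ p.2)))
      * adL4E n (L p.1 p.2) := by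
  simp only [fuzzyDirac_eq_offDiag, opV4E_mul_dirac_mul_opV4E, Wmat_mul_fromBlocks_mul_WmatInv]

lemma Wmat_conj_fuzzyDirac_apply_inl (ψ : H4 n) (i : Fin 2) :
    (opV4E n Wmat * fuzzyDirac n σ L * opV4E n WmatInv) ψ (Sum.inl i) =
      GPop n σ L (fun j => ψ (Sum.inl j)) i := by
  simp only [Wmat_conj_fuzzyDirac, GPop, LinearMap.add_apply, LinearMap.sum_apply,
    Finset.sum_apply, Module.End.mul_apply, Pi.add_apply, opV4E_fromBlocks_apply_inl,
    adL4E_apply_comp, opVE_one, Module.End.one_apply]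

lemma Wmat_conj_fuzzyDirac_apply_inr (ψ : H4 n) (i : Fin 2) :
    (opV4E n Wmat * fuzzyDirac n σ L * opV4E n WmatInv) ψ (Sum.inr i) =
      -GPop n σ L (fun j => ψ (Sum.inr j)) i := by
  simp only [Wmat_conj_fuzzyDirac, GPop, LinearMap.add_apply, LinearMap.sum_apply,
    Finset.sum_apply, Module.End.mul_apply, Pi.add_apply, opV4E_fromBlocks_apply_inr,
    adL4E_apply_comp, opVE_neg, opVE_one, Module.End.one_apply, LinearMap.neg_apply,
    Pi.neg_apply, Finset.sum_neg_distrib, neg_add]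

lemma chirality_conj_fuzzyDirac :
    opV4E n chirality * fuzzyDirac n σ L * opV4E n chirality = -fuzzyDirac n σ L := by
  simp only [fuzzyDirac_eq_offDiag, opV4E_mul_dirac_mul_opV4E,
    chirality_mul_fromBlocks_mul_chirality, opV4E_neg]
  rw [neg_add, ← Finset.sum_neg_distrib]
  exact congrArg _ (Finset.sum_congr rfl fun _ _ => LinearMap.neg_comp _ _)

lemma fuzzyDirac_hasEigenvalue_neg {μ : ℂ} (hμ : (fuzzyDirac n σ L).HasEigenvalue μ) :
    (fuzzyDirac n σ L).HasEigenvalue (-μ) :=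
  hμ.neg_of_conj_eq_neg (by rw [← opV4E_mul, chirality_mul_self, opV4E_one])
    (chirality_conj_fuzzyDirac σ L)

end FuzzyDirac

theorem fuzzy_dirac_block_diagonalisation_general
    (n : ℕ) (σ : Fin 3 → Matrix (Fin 2) (Fin 2) ℂ)
    (L : Fin 3 → Fin 3 → Matrix (Fin n) (Fin n) ℂ) :
    Wmat * WmatInv = 1 ∧ WmatInv * Wmat = 1
    -- WDW⁻¹ = diag(d̃, −d̃)
    ∧ (∀ (ψ : H4 n) (i : Fin 2),
        ((opV4E n Wmat * fuzzyDirac n σ L * opV4E n WmatInv) ψ) (Sum.inl i)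
          = (GPop n σ L) (fun j => ψ (Sum.inl j)) i
        ∧ ((opV4E n Wmat * fuzzyDirac n σ L * opV4E n WmatInv) ψ) (Sum.inr i)
          = -((GPop n σ L) (fun j => ψ (Sum.inr j)) i))
    -- the spectrum of D is symmetric about 0
    ∧ (∀ μ : ℂ, Module.End.HasEigenvalue (fuzzyDirac n σ L) μ →
        Module.End.HasEigenvalue (fuzzyDirac n σ L) (-μ)) :=
  ⟨Wmat_mul_WmatInv, WmatInv_mul_Wmat,
    fun ψ i => ⟨Wmat_conj_fuzzyDirac_apply_inl σ L ψ i, Wmat_conj_fuzzyDirac_apply_inr σ L ψ i⟩,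
    fun _ => fuzzyDirac_hasEigenvalue_neg σ L⟩

/-- Conjugation by W block-diagonalises the fuzzy sphere Dirac
operator D as WDW⁻¹ = diag(d̃, −d̃), where d̃ is the Grosse–Presnajder operator;
consequently the spectrum of D is symmetric about 0. -/
theorem fuzzy_dirac_block_diagonalisation
    (n : ℕ) (σ : Fin 3 → Matrix (Fin 2) (Fin 2) ℂ)
    (hσ : ∀ j k, σ j * σ k + σ k * σ j =
      if j = k then (-2 : ℂ) • (1 : Matrix (Fin 2) (Fin 2) ℂ) else 0)
    (L : Fin 3 → Fin 3 → Matrix (Fin n) (Fin n) ℂ)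
    (hLanti : ∀ j k, L j k = -L k j)
    (hLrel : ∀ j k l m, L j k * L l m - L l m * L j k =
      (if k = l then (1:ℂ) else 0) • L j m - (if k = m then (1:ℂ) else 0) • L j l
        - (if j = l then (1:ℂ) else 0) • L k m + (if j = m then (1:ℂ) else 0) • L k l) :
    Wmat * WmatInv = 1 ∧ WmatInv * Wmat = 1
    -- WDW⁻¹ = diag(d̃, −d̃)
    ∧ (∀ (ψ : H4 n) (i : Fin 2),
        ((opV4E n Wmat * fuzzyDirac n σ L * opV4E n WmatInv) ψ) (Sum.inl i)
          = (GPop n σ L) (fun j => ψ (Sum.inl j)) i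
        ∧ ((opV4E n Wmat * fuzzyDirac n σ L * opV4E n WmatInv) ψ) (Sum.inr i)
          = -((GPop n σ L) (fun j => ψ (Sum.inr j)) i))
    -- the spectrum of D is symmetric about 0
    ∧ (∀ μ : ℂ, Module.End.HasEigenvalue (fuzzyDirac n σ L) μ →
        Module.End.HasEigenvalue (fuzzyDirac n σ L) (-μ)) :=
  fuzzy_dirac_block_diagonalisation_general n σ L
end
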